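/- For t ∈ ℝ define a(t) = (1 + 2·cos 2t)/3 and let ω = e^{2πi/3}. Then for each ℓ ∈ {−1, 0, 1}, a(t) + ω^ℓ·a(t − π/3) + ω^{−ℓ}·a(t + π/3) = e^{2iℓt}. Consequently, the 3×3 circulant matrix A(t) with rows [a(t), a(t−π/3), a(t+π/3)], [a(t+π/3), a(t), a(t−π/3)], [a(t−π/3), a(t+π/3), a(t)] has eigenvalues e^{−2it}, 1, e^{2it} and determinant det A(t) = 1. -/
import Mathlib


/-- a(t) = (1 + 2·cos 2t)/3. -/
noncomputable def aFun (t : ℝ) : ℝ := (1 + 2 * Real.cos (2 * t)) / 3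

/-- ω = e^{2πi/3}. -/
noncomputable def ω : ℂ := Complex.exp (2 * Real.pi * Complex.I / 3)

/-- The 3×3 circulant matrix A(t) built from a(t). -/
noncomputable def Amat (t : ℝ) : Matrix (Fin 3) (Fin 3) ℝ :=
  !![aFun t, aFun (t - Real.pi / 3), aFun (t + Real.pi / 3);
     aFun (t + Real.pi / 3), aFun t, aFun (t - Real.pi / 3);
     aFun (t - Real.pi / 3), aFun (t + Real.pi / 3), aFun t]

/-- For ℓ ∈ {−1, 0, 1}, a(t) + ω^ℓ·a(t − π/3) + ω^{−ℓ}·a(t + π/3) = e^{2iℓt};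
consequently A(t) has eigenvalues e^{−2it}, 1, e^{2it} and determinant 1. -/
theorem Amat_eigenvalues_and_det (t : ℝ) :
    (∀ ℓ : ℤ, ℓ = -1 ∨ ℓ = 0 ∨ ℓ = 1 →
      (aFun t : ℂ) + ω ^ ℓ * (aFun (t - Real.pi / 3) : ℂ) +
          ω ^ (-ℓ) * (aFun (t + Real.pi / 3) : ℂ) =
        Complex.exp (2 * Complex.I * ℓ * t)) ∧
    spectrum ℂ ((Amat t).map (Complex.ofReal)) =
      {Complex.exp (-(2 * Complex.I * t)), 1, Complex.exp (2 * Complex.I * t)} ∧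
    (Amat t).det = 1 := by
  have h3 : ω ^ 3 = 1 := by
    rw [ω, ← Complex.exp_nat_mul,
      show (3:ℕ) * (2 * ↑Real.pi * Complex.I / 3) = 2 * ↑Real.pi * Complex.I by push_cast; ring]
    exact Complex.exp_two_pi_mul_I
  have hs : 1 + ω + ω ^ 2 = 0 := by
    have hne : ω ≠ 1 := by
      rw [ω]; intro h
      rw [Complex.exp_eq_one_iff] at h
      obtain ⟨n, hn⟩ := h
      have hz : (2 * (Real.pi:ℂ) * Complex.I) ≠ 0 := by
        simp [Real.pi_ne_zero, Complex.I_ne_zero, Complex.ofReal_ne_zero]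
      have hc : ((3 * n : ℤ) : ℂ) = ((1 : ℤ) : ℂ) := by
        have h2 : ((3 * n : ℤ) : ℂ) * (2 * (Real.pi:ℂ) * Complex.I)
            = ((1:ℤ):ℂ) * (2 * (Real.pi:ℂ) * Complex.I) := by
          push_cast; linear_combination -3 * hn
        exact mul_right_cancel₀ hz h2
      have := Int.cast_injective (α := ℂ) hc
      omega
    have h0 : (ω - 1) * (1 + ω + ω ^ 2) = 0 := by linear_combination h3
    rcases mul_eq_zero.mp h0 with h | h
    · exact absurd (sub_eq_zero.mp h) hne
    · exact h
  have hinv : ω⁻¹ = ω ^ 2 := inv_eq_of_mul_eq_one_right (by linear_combination h3)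
  have g1 : Complex.exp (2 * Complex.I * ((t:ℂ) - ↑Real.pi / 3))
      = Complex.exp (2 * Complex.I * (t:ℂ)) * ω ^ 2 := by
    rw [ω, ← Complex.exp_nat_mul, ← Complex.exp_add,
      show (2 * Complex.I * (t:ℂ) + (2:ℕ) * (2 * ↑Real.pi * Complex.I / 3))
        = 2 * Complex.I * ((t:ℂ) - ↑Real.pi / 3) + (2 * ↑Real.pi * Complex.I) by push_cast; ring,
      Complex.exp_add, Complex.exp_two_pi_mul_I, mul_one]
  have g2 : Complex.exp (-(2 * Complex.I * ((t:ℂ) - ↑Real.pi / 3)))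
      = Complex.exp (-(2 * Complex.I * (t:ℂ))) * ω := by
    rw [ω, ← Complex.exp_add]; congr 1; ring
  have g3 : Complex.exp (2 * Complex.I * ((t:ℂ) + ↑Real.pi / 3))
      = Complex.exp (2 * Complex.I * (t:ℂ)) * ω := by
    rw [ω, ← Complex.exp_add]; congr 1; ring
  have g4 : Complex.exp (-(2 * Complex.I * ((t:ℂ) + ↑Real.pi / 3)))
      = Complex.exp (-(2 * Complex.I * (t:ℂ))) * ω ^ 2 := by
    rw [ω, ← Complex.exp_nat_mul, ← Complex.exp_add,
      show (-(2 * Complex.I * (t:ℂ)) + (2:ℕ) * (2 * ↑Real.pi * Complex.I / 3))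
        = -(2 * Complex.I * ((t:ℂ) + ↑Real.pi / 3)) + (2 * ↑Real.pi * Complex.I) by push_cast; ring,
      Complex.exp_add, Complex.exp_two_pi_mul_I, mul_one]
  have hexp : ∀ s : ℝ, (aFun s : ℂ)
      = (1 + Complex.exp (2 * Complex.I * s) + Complex.exp (-(2 * Complex.I * s))) / 3 := by
    intro s
    have h := Complex.two_cos (2 * (s : ℂ))
    rw [show (2 * (s:ℂ)) * Complex.I = 2 * Complex.I * s by ring,
        show -(2 * (s:ℂ)) * Complex.I = -(2 * Complex.I * s) by ring] at h
    rw [aFun]; push_cast [Complex.ofReal_cos]; linear_combination h / 3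
  set U := Complex.exp (2 * Complex.I * (t:ℂ)) with hU
  set V := Complex.exp (-(2 * Complex.I * (t:ℂ))) with hV
  have huv : U * V = 1 := by rw [hU, hV, ← Complex.exp_add]; simp
  have ha : (aFun t : ℂ) = (1 + U + V) / 3 := hexp t
  have hb : (aFun (t - Real.pi/3) : ℂ) = (1 + U * ω ^ 2 + V * ω) / 3 := by
    have h := hexp (t - Real.pi/3); push_cast at h; rw [g1, g2] at h; exact h
  have hc : (aFun (t + Real.pi/3) : ℂ) = (1 + U * ω + V * ω ^ 2) / 3 := by
    have h := hexp (t + Real.pi/3); push_cast at h; rw [g3, g4] at h; exact h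
  have k1 : (aFun t : ℂ) + ω * (aFun (t - Real.pi/3) : ℂ)
      + ω ^ 2 * (aFun (t + Real.pi/3) : ℂ) = U := by
    rw [ha, hb, hc]
    linear_combination (1 + 2*U*(ω-1) + V + V*ω*(ω-1)) / 3 * hs
  have k0 : (aFun t : ℂ) + (aFun (t - Real.pi/3) : ℂ) + (aFun (t + Real.pi/3) : ℂ) = 1 := by
    rw [ha, hb, hc]
    linear_combination (U + V) / 3 * hs
  have km : (aFun t : ℂ) + ω ^ 2 * (aFun (t - Real.pi/3) : ℂ)
      + ω * (aFun (t + Real.pi/3) : ℂ) = V := by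
    rw [ha, hb, hc]
    linear_combination (1 + 2*V*(ω-1) + U + U*ω*(ω-1)) / 3 * hs
  have hdet : ∀ μ : ℂ,
      (algebraMap ℂ (Matrix (Fin 3) (Fin 3) ℂ) μ - (Amat t).map Complex.ofReal).det
        = (μ - V) * (μ - 1) * (μ - U) := by
    intro μ
    rw [Matrix.det_fin_three]
    simp only [Amat, Matrix.sub_apply, Matrix.map_apply, Matrix.algebraMap_matrix_apply,
      Matrix.cons_val', Matrix.cons_val_zero, Matrix.cons_val_one, Matrix.head_cons,
      Matrix.empty_val', Matrix.cons_val_fin_one, Matrix.head_fin_const, Matrix.of_apply,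
      Matrix.cons_val_two, Matrix.tail_cons]
    norm_num [Fin.ext_iff, Algebra.algebraMap_self_apply]
    rw [ha, hb, hc]
    linear_combination ((-1/3) * V*μ + (-1/9) * V^2 + (1/3) * V^2*μ + (-1/27) * V^3 + (-1/3) * U*μ + (7/9) * U*V + (-1/3) * U*V*μ + (-1/9) * U*V^2 + (-1/9) * U^2 + (1/3) * U^2*μ + (-1/9) * U^2*V + (-1/27) * U^3 + (2/9) * ω*V^2 + (-1/3) * ω*V^2*μ + (1/27) * ω*V^3 + (-5/9) * ω*U*V + (1/3) * ω*U*V*μ + (1/9) * ω*U*V^2 + (2/9) * ω*U^2 + (-1/3) * ω*U^2*μ + (1/9) * ω*U^2*V + (1/27) * ω*U^3 + (-1/9) * ω^2*V^2 + (1/9) * ω^2*U*V + (-1/3) * ω^2*U*V*μ + (1/9) * ω^2*U*V^2 + (-1/9) * ω^2*U^2 + (1/9) * ω^2*U^2*V + (1/27) * ω^3*V^3 + (-1/9) * ω^3*U*V^2 + (-1/9) * ω^3*U^2*V + (1/27) * ω^3*U^3 + (-1/27) * ω^4*V^3 + (-1/27) * ω^4*U^3) * hs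
  refine ⟨?_, ?_, ?_⟩
  · intro ℓ hℓ
    rcases hℓ with rfl | rfl | rfl
    · simp only [Int.cast_neg, Int.cast_one, zpow_neg, zpow_one, neg_neg, hinv]
      rw [show 2 * Complex.I * (-1 : ℂ) * (t:ℂ) = -(2 * Complex.I * (t:ℂ)) by ring]
      exact km
    · simp only [Int.cast_zero, zpow_zero, neg_zero, one_mul]
      rw [show 2 * Complex.I * (0 : ℂ) * (t:ℂ) = 0 by ring, Complex.exp_zero]
      exact k0
    · simp only [Int.cast_one, zpow_neg, zpow_one, hinv]
      rw [show 2 * Complex.I * (1 : ℂ) * (t:ℂ) = 2 * Complex.I * (t:ℂ) by ring]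
      exact k1
  · ext μ
    simp only [Set.mem_insert_iff, Set.mem_singleton_iff]
    rw [spectrum.mem_iff, Matrix.isUnit_iff_isUnit_det, isUnit_iff_ne_zero, not_not, hdet μ,
      mul_eq_zero, mul_eq_zero, sub_eq_zero, sub_eq_zero, sub_eq_zero, or_assoc]
  · have h0 : ((Amat t).map Complex.ofReal).det = 1 := by
      have h := hdet 0
      rw [map_zero, zero_sub, Matrix.det_neg] at h
      simp only [Fintype.card_fin] at h
      linear_combination -h + huv
    have h2 : ((Amat t).det : ℂ) = ((1:ℝ):ℂ) := by
      have h := RingHom.map_det Complex.ofRealHom (Amat t)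
      simp only [RingHom.mapMatrix_apply] at h
      rw [show ((Amat t).map ⇑Complex.ofRealHom) = (Amat t).map Complex.ofReal from rfl] at h
      rw [show (Complex.ofRealHom (Amat t).det) = ((Amat t).det : ℂ) from rfl] at h
      rw [h, h0]; norm_num
    exact_mod_cast h2
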